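/- arXiv:2604.01636 — 5 statements merged into one kernel-verified Lean document; each statement's English description precedes it below -/
import Mathlib

section
/- If a sequence (t_n) of reals satisfies t_0 = 1, t_n ≥ (n+2)/2 for all n, and t_n^2 ≥ t_{n+1}^2 − t_{n+1} for all n, then t_n ≤ (n+1+√(n+1))/2 for all n ∈ ℕ. -/
theorem fista_param_upper_bound (t : ℕ → ℝ)
    (h0 : t 0 = 1)
    (h1 : ∀ n : ℕ, t n ≥ ((n : ℝ) + 2) / 2)
    (h2 : ∀ n : ℕ, (t n) ^ 2 ≥ (t (n + 1)) ^ 2 - t (n + 1)) :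
    ∀ n : ℕ, t n ≤ ((n : ℝ) + 1 + Real.sqrt ((n : ℝ) + 1)) / 2 := by
  intro n
  induction n with
  | zero =>
    simp only [Nat.cast_zero, zero_add]
    rw [h0, Real.sqrt_one]
    norm_num
  | succ n ih =>
    have hs1 : Real.sqrt ((n : ℝ) + 1) ^ 2 = (n : ℝ) + 1 :=
      Real.sq_sqrt (by positivity)
    have hs2 : Real.sqrt ((n : ℝ) + 1 + 1) ^ 2 = (n : ℝ) + 1 + 1 :=
      Real.sq_sqrt (by positivity)
    have hmono : Real.sqrt ((n : ℝ) + 1) ≤ Real.sqrt ((n : ℝ) + 1 + 1) :=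
      Real.sqrt_le_sqrt (by linarith)
    have hnn : (0:ℝ) ≤ Real.sqrt ((n : ℝ) + 1) := Real.sqrt_nonneg _
    have ht : t (n + 1) ≥ ((n : ℝ) + 3) / 2 := by
      have := h1 (n + 1); push_cast at this; linarith
    have hkey := h2 n
    have hB : t n ^ 2 ≤ (((n : ℝ) + 1 + Real.sqrt ((n : ℝ) + 1)) / 2) ^ 2 := by
      have htn : (0:ℝ) ≤ t n := by have := h1 n; linarith
      exact pow_le_pow_left₀ htn ih 2
    push_cast
    nlinarith [sq_nonneg (t (n+1) - ((n : ℝ) + 1 + 1 + Real.sqrt ((n : ℝ) + 1 + 1)) / 2),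
      mul_le_mul_of_nonneg_left hmono (by linarith : (0:ℝ) ≤ (n:ℝ)+1)]
end

section
/- If a sequence (t_n) of reals satisfies t_0 = 1, t_n ≥ (n+2)/2 for all n, and t_n^2 ≥ t_{n+1}^2 − t_{n+1} for all n, then (t_n − 1)/t_{n+1} → 1 as n → ∞. -/
/-! From `t (n+1)^2 - t (n+1) ≤ t n ^ 2` one gets `(t (n+1) - 1/2)^2 ≤ t n ^ 2 + 1/4`, so each step
raises `t` by at most `1/2 + 1/(8 t n)`, an increment tending to `1/2` because `t n ≥ (n+2)/2`.
By Cesàro averaging `t n / n → 1/2`, hence consecutive terms have ratio tending to `1`, and the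
shift by `-1` is negligible since `t n → ∞`. -/

open Filter Finset Topology

lemma le_add_half_add_inv_of_sq_sub_le_sq {a b : ℝ} (ha : 0 < a) (h : b ^ 2 - b ≤ a ^ 2) :
    b ≤ a + 1 / 2 + (8 * a)⁻¹ := by
  have hprod : a * (8 * a)⁻¹ = 1 / 8 := by field_simp
  have hsq : (b - 1 / 2) ^ 2 ≤ (a + (8 * a)⁻¹) ^ 2 := by
    nlinarith [sq_nonneg (8 * a)⁻¹]
  linarith [le_of_sq_le_sq hsq (by positivity)]

lemma le_add_sum_of_succ_le_add {u d : ℕ → ℝ} (h : ∀ n, u (n + 1) ≤ u n + d n) (n : ℕ) :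
    u n ≤ u 0 + ∑ k ∈ range n, d k := by
  have := sum_le_sum fun k (_ : k ∈ range n) => sub_le_iff_le_add'.2 (h k)
  rw [sum_range_sub] at this
  linarith

lemma tendsto_div_natCast_of_succ_le_add {u d : ℕ → ℝ} {L : ℝ} (hd : Tendsto d atTop (𝓝 L))
    (hlow : ∀ n, L * n ≤ u n) (hstep : ∀ n, u (n + 1) ≤ u n + d n) :
    Tendsto (fun n : ℕ => u n / n) atTop (𝓝 L) := by
  have hupper : Tendsto (fun n : ℕ => u 0 / n + (n : ℝ)⁻¹ * ∑ k ∈ range n, d k) atTop (𝓝 L) := by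
    simpa using (tendsto_const_div_atTop_nhds_zero_nat (u 0)).add hd.cesaro
  refine tendsto_of_tendsto_of_tendsto_of_le_of_le' tendsto_const_nhds hupper ?_ ?_
  all_goals
    filter_upwards [eventually_gt_atTop 0] with n hn
    have hn : (0 : ℝ) < n := Nat.cast_pos.2 hn
  · exact (le_div_iff₀ hn).2 (hlow n)
  · have hsum : (n : ℝ)⁻¹ * (∑ k ∈ range n, d k) * n = ∑ k ∈ range n, d k := by field_simp
    rw [div_le_iff₀ hn, add_mul, div_mul_cancel₀ _ hn.ne', hsum]
    exact le_add_sum_of_succ_le_add hstep n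

lemma tendsto_div_succ_of_tendsto_div_natCast {u : ℕ → ℝ} {c : ℝ} (hc : c ≠ 0)
    (hu : Tendsto (fun n : ℕ => u n / n) atTop (𝓝 c)) :
    Tendsto (fun n => u n / u (n + 1)) atTop (𝓝 1) := by
  have hsucc : Tendsto (fun n : ℕ => u (n + 1) / (n + 1 : ℕ)) atTop (𝓝 c) :=
    hu.comp (tendsto_add_atTop_nat 1)
  have := (hu.mul (tendsto_natCast_div_add_atTop (1 : ℝ))).div hsucc hc
  rw [mul_one, div_self hc] at this
  refine this.congr' ?_
  filter_upwards [eventually_gt_atTop 0] with n hn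
  have hn : (n : ℝ) ≠ 0 := Nat.cast_ne_zero.2 hn.ne'
  have hn1 : (n : ℝ) + 1 ≠ 0 := by positivity
  simp only [Pi.div_apply]
  push_cast
  field_simp

theorem fista_param_ratio_tendsto_one_general (t : ℕ → ℝ)
    (h1 : ∀ n : ℕ, t n ≥ ((n : ℝ) + 2) / 2)
    (h2 : ∀ n : ℕ, (t n) ^ 2 ≥ (t (n + 1)) ^ 2 - t (n + 1)) :
    Filter.Tendsto (fun n : ℕ => (t n - 1) / t (n + 1)) Filter.atTop (nhds 1) := by
  have hpos : ∀ n, 0 < t n := fun n => lt_of_lt_of_le (by positivity) (h1 n)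
  have htop : Tendsto t atTop atTop :=
    tendsto_atTop_mono h1 <| (tendsto_natCast_atTop_atTop.atTop_add tendsto_const_nhds).atTop_div_const
      two_pos
  have hinc : Tendsto (fun n => 1 / 2 + (8 * t n)⁻¹) atTop (𝓝 (1 / 2)) := by
    simpa using tendsto_const_nhds.add
      (tendsto_inv_atTop_zero.comp (htop.const_mul_atTop (by norm_num : (0 : ℝ) < 8)))
  have hgrowth : Tendsto (fun n : ℕ => t n / n) atTop (𝓝 (1 / 2)) :=
    tendsto_div_natCast_of_succ_le_add hinc (fun n => by linarith [h1 n])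
      fun n => by linarith [le_add_half_add_inv_of_sq_sub_le_sq (hpos n) (h2 n)]
  have hinv : Tendsto (fun n => (t (n + 1))⁻¹) atTop (𝓝 0) :=
    tendsto_inv_atTop_zero.comp (htop.comp (tendsto_add_atTop_nat 1))
  simpa [sub_div] using
    (tendsto_div_succ_of_tendsto_div_natCast (by norm_num) hgrowth).sub hinv

theorem fista_param_ratio_tendsto_one (t : ℕ → ℝ)
    (h0 : t 0 = 1)
    (h1 : ∀ n : ℕ, t n ≥ ((n : ℝ) + 2) / 2)
    (h2 : ∀ n : ℕ, (t n) ^ 2 ≥ (t (n + 1)) ^ 2 - t (n + 1)) :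
    Filter.Tendsto (fun n : ℕ => (t n - 1) / t (n + 1)) Filter.atTop (nhds 1) :=
  fista_param_ratio_tendsto_one_general t h1 h2
end

section
/- If a sequence (t_n) of reals satisfies t_n ≥ (n+2)/2 for all n and t_n^2 ≥ t_{n+1}^2 − t_{n+1} for all n, then liminf_{n→∞} (t_n − 1)/t_{n+1} ≥ 1. -/
theorem fista_param_ratio_liminf (t : ℕ → ℝ)
    (h1 : ∀ n : ℕ, t n ≥ ((n : ℝ) + 2) / 2)
    (h2 : ∀ n : ℕ, (t n) ^ 2 ≥ (t (n + 1)) ^ 2 - t (n + 1)) :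
    1 ≤ Filter.liminf (fun n : ℕ => (t n - 1) / t (n + 1)) Filter.atTop := by
  have hpos : ∀ n : ℕ, 0 < t n := by
    intro n
    have := h1 n
    have : (0 : ℝ) < ((n : ℝ) + 2) / 2 := by positivity
    linarith [h1 n]
  have hge1 : ∀ n : ℕ, 1 ≤ t n := by
    intro n
    have := h1 n
    have hn : (0 : ℝ) ≤ (n : ℝ) := Nat.cast_nonneg n
    linarith
  have key : ∀ n : ℕ, t n ≥ t (n + 1) - 1 := by
    intro n
    have h := h2 n
    have ha := hge1 (n + 1)
    have hb := hpos n
    nlinarith [sq_nonneg (t n - (t (n + 1) - 1)), sq_nonneg (t n + t (n + 1) - 1)]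
  -- lower bound sequence
  set g : ℕ → ℝ := fun n => 1 - 2 / t (n + 1) with hg
  have hfg : ∀ n : ℕ, g n ≤ (t n - 1) / t (n + 1) := by
    intro n
    have hp := hpos (n + 1)
    simp only [hg]
    rw [le_div_iff₀ hp]
    have := key n
    have h2p : (2 : ℝ) / t (n + 1) * t (n + 1) = 2 := by field_simp
    nlinarith [this, hp]
  have htend : Filter.Tendsto (fun n : ℕ => t (n + 1)) Filter.atTop Filter.atTop := by
    apply Filter.tendsto_atTop_mono (fun n => h1 (n + 1))
    have : Filter.Tendsto (fun n : ℕ => ((n : ℝ) + 1 + 2) / 2) Filter.atTop Filter.atTop := by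
      apply Filter.Tendsto.atTop_div_const (by norm_num)
      exact Filter.tendsto_atTop_add_const_right _ _
        (Filter.tendsto_atTop_add_const_right _ _ tendsto_natCast_atTop_atTop)
    convert this using 2 with n
    push_cast
    ring
  have hgtend : Filter.Tendsto g Filter.atTop (nhds 1) := by
    have : Filter.Tendsto (fun n : ℕ => 2 / t (n + 1)) Filter.atTop (nhds 0) :=
      Filter.Tendsto.div_atTop tendsto_const_nhds htend
    have := Filter.Tendsto.const_sub (1 : ℝ) this
    simpa using this
  have hglim : Filter.liminf g Filter.atTop = 1 := hgtend.liminf_eq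
  have step : ∀ n : ℕ, t (n + 1) ≤ t n + 1 := by
    intro n
    nlinarith [h2 n, hpos n, hpos (n + 1), mul_pos (hpos n) (hpos (n + 1))]
  have hub : ∀ n : ℕ, t n ≤ t 0 + n := by
    intro n
    induction n with
    | zero => simp
    | succ k ih =>
      have := step k
      push_cast
      linarith
  have hbd : ∀ n : ℕ, (t n - 1) / t (n + 1) ≤ 2 * t 0 := by
    intro n
    rw [div_le_iff₀ (hpos (n + 1))]
    have h0 := hge1 0
    have ha := h1 (n + 1)
    have hb := hub n
    have hn : (0 : ℝ) ≤ (n : ℝ) := Nat.cast_nonneg n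
    push_cast at ha
    nlinarith
  have hle : Filter.liminf g Filter.atTop ≤
      Filter.liminf (fun n : ℕ => (t n - 1) / t (n + 1)) Filter.atTop := by
    apply Filter.liminf_le_liminf (Filter.Eventually.of_forall hfg)
      hgtend.isBoundedUnder_ge
      (Filter.isBoundedUnder_of ⟨2 * t 0, fun n => hbd n⟩).isCoboundedUnder_ge
  rw [hglim] at hle
  exact hle
end

section
/- Let T be a linear nonexpansive operator on a real Hilbert space X that is the proximal gradient operator of a convex β-smooth f and proper lsc convex g with Argmin(f+g) ≠ ∅. Then the FISTA sequences (x_n), (y_n) with starting point x_0 converge strongly: x_n → P_{Fix T} x_0 and y_n → P_{Fix T} x_0. -/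
/-!
For `F = f + g` the prox-gradient step satisfies the three-point inequality
`F (T z) + β/2 ‖T z - w‖² ≤ F w + β/2 ‖z - w‖²` for every `w` in the domain of `g` (descent
lemma and gradient inequality for `f`, variational inequality of the prox for `g`). It makes the
Beck–Teboulle energy `2 t_n² (F x_{n+1} - F p) + β ‖t_n x_{n+1} - (t_n - 1) x_n - p‖²`
nonincreasing for every fixed point `p`, whence `‖x_n - p‖ ≤ ‖x_0 - p‖`,
`t_n ‖x_{n+1} - T x_{n+1}‖ ≤ ‖x_0 - p‖` and `t_n ‖x_{n+1} - x_n‖ ≤ 2 ‖x_0 - p‖`.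

For linear `T` the map `x_0 ↦ x_n` is linear and commutes with `T`, and `T` is nonexpansive
(take `w = 0`), so `x_0 - P x_0` lies in the closure of the range of `1 - T`. Writing
`x_0 = P x_0 + e + (v - T v)` with `e` small, the FISTA sequence from `P x_0 + e` stays within
`‖e‖` of `P x_0`, and the one from `v - T v` is `(1 - T)` applied to the one from `v`, hence
`O(1 / t_n)`.
-/

open Filter Topology
open scoped RealInnerProductSpace

lemma nonpos_of_forall_le_mul {c K : ℝ} (h : ∀ r ∈ Set.Ioo (0 : ℝ) 1, c ≤ r * K) : c ≤ 0 := by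
  have hlim : Tendsto (fun r : ℝ => r * K) (𝓝[>] 0) (𝓝 0) :=
    ((continuous_mul_const K).tendsto' 0 0 (zero_mul K)).mono_left nhdsWithin_le_nhds
  exact ge_of_tendsto hlim (eventually_of_mem (Ioo_mem_nhdsGT one_pos) h)

section

variable {X : Type*} [NormedAddCommGroup X]

/-- `u = prox_{g/β} A`. -/
def IsProx (β : ℝ) (g : X → EReal) (A u : X) : Prop :=
  ∀ z, g u + ((β / 2 * ‖u - A‖ ^ 2 : ℝ) : EReal) ≤ g z + ((β / 2 * ‖z - A‖ ^ 2 : ℝ) : EReal)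

lemma IsProx.ne_top {β : ℝ} {g : X → EReal} {A u : X} (h : IsProx β g A u)
    (hg : ∃ z, g z ≠ ⊤) : g u ≠ ⊤ := by
  obtain ⟨z, hz⟩ := hg
  intro hu
  have := h z
  rw [hu, EReal.top_add_coe, top_le_iff] at this
  exact (EReal.add_lt_top hz (EReal.coe_ne_top _)).ne this

/-- Comparison points are restricted to the range of `T`, which lies in the domain of `g`:
elsewhere `F = f + (g ·).toReal` takes junk values. -/
def ProxGradInequality (F : X → ℝ) (β : ℝ) (T : X → X) : Prop :=
  ∀ z w, F (T z) + β / 2 * ‖T z - T w‖ ^ 2 ≤ F (T w) + β / 2 * ‖z - T w‖ ^ 2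

lemma ProxGradInequality.le_of_isFixedPt {F : X → ℝ} {β : ℝ} {T : X → X}
    (hT : ProxGradInequality F β T) {p : X} (hp : T p = p) (w : X) : F p ≤ F (T w) := by
  have := hT p w
  rw [hp] at this
  linarith

variable [InnerProductSpace ℝ X]

section Smooth

variable [CompleteSpace X] {f : X → ℝ} {f' : X → X}

lemma hasDerivAt_comp_line_of_hasGradientAt (hf : ∀ x, HasGradientAt f (f' x) x)
    (a d : X) (s : ℝ) :
    HasDerivAt (fun r : ℝ => f (a + r • d)) ⟪f' (a + s • d), d⟫ s := by
  have hline : HasDerivAt (fun r : ℝ => a + r • d) d s := by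
    simpa using ((hasDerivAt_id s).smul_const d).const_add a
  exact (hf (a + s • d)).hasFDerivAt.comp_hasDerivAt s hline

lemma ConvexOn.add_inner_le_of_hasGradientAt (hconv : ConvexOn ℝ Set.univ f)
    (hf : ∀ x, HasGradientAt f (f' x) x) (a b : X) :
    f a + ⟪f' a, b - a⟫ ≤ f b := by
  have hline : ConvexOn ℝ Set.univ (fun r : ℝ => f (a + r • (b - a))) := by
    simpa [Function.comp_def, AffineMap.lineMap_apply_module', add_comm] using
      hconv.comp_affineMap (AffineMap.lineMap a b)
  have hder := hasDerivAt_comp_line_of_hasGradientAt hf a (b - a) 0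
  have := hline.le_slope_of_hasDerivAt (Set.mem_univ 0) (Set.mem_univ 1) one_pos
    (by simpa using hder)
  simp only [slope_def_field, one_smul, add_sub_cancel, zero_smul, add_zero, sub_zero,
    div_one] at this
  linarith

lemma descent_lemma {β : ℝ} (hβ : 0 ≤ β) (hf : ∀ x, HasGradientAt f (f' x) x)
    (hlip : LipschitzWith β.toNNReal f') (a b : X) :
    f b ≤ f a + ⟪f' a, b - a⟫ + β / 2 * ‖b - a‖ ^ 2 := by
  set d := b - a
  set φ : ℝ → ℝ := fun s => f (a + s • d) - s * ⟪f' a, d⟫ - β / 2 * s ^ 2 * ‖d‖ ^ 2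
  have hφ : ∀ s, HasDerivAt φ (⟪f' (a + s • d) - f' a, d⟫ - β * s * ‖d‖ ^ 2) s := by
    intro s
    refine (((hasDerivAt_comp_line_of_hasGradientAt hf a d s).sub
      ((hasDerivAt_id s).mul_const ⟪f' a, d⟫)).sub
      (((hasDerivAt_pow 2 s).const_mul (β / 2)).mul_const (‖d‖ ^ 2))).congr_deriv ?_
    simp only [inner_sub_left]
    ring
  have hanti : AntitoneOn φ (Set.Icc 0 1) := by
    refine antitoneOn_of_hasDerivWithinAt_nonpos (convex_Icc 0 1)
      (fun s _ => (hφ s).continuousAt.continuousWithinAt) (fun s _ => (hφ s).hasDerivWithinAt)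
      fun s hs => ?_
    rw [interior_Icc] at hs
    have hgrad : ‖f' (a + s • d) - f' a‖ ≤ β * (s * ‖d‖) := by
      have := hlip.norm_sub_le (a + s • d) a
      rwa [Real.coe_toNNReal _ hβ, add_sub_cancel_left, norm_smul,
        Real.norm_of_nonneg hs.1.le] at this
    linarith [real_inner_le_norm (f' (a + s • d) - f' a) d,
      mul_le_mul_of_nonneg_right hgrad (norm_nonneg d)]
  have := hanti (by simp) (by simp) zero_le_one
  simp only [φ, d, one_smul, add_sub_cancel, one_mul, one_pow, mul_one, zero_smul, add_zero,
    zero_mul, sub_zero, ne_eq, OfNat.ofNat_ne_zero, not_false_eq_true, zero_pow, mul_zero] at this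
  linarith

end Smooth

lemma IsProx.inner_le {β : ℝ} {g : X → EReal} {A u : X}
    (hconv : ∀ x y : X, ∀ a b : ℝ, 0 ≤ a → 0 ≤ b → a + b = 1 →
      g (a • x + b • y) ≤ (a : EReal) * g x + (b : EReal) * g y)
    (hbot : ∀ x, g x ≠ ⊥) (h : IsProx β g A u) (hu : g u ≠ ⊤) {w : X} (hw : g w ≠ ⊤) :
    (g u).toReal + β * ⟪A - u, w - u⟫ ≤ (g w).toReal := by
  obtain ⟨r, hr⟩ : ∃ r : ℝ, g u = r := ⟨_, (EReal.coe_toReal hu (hbot u)).symm⟩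
  obtain ⟨s, hs⟩ : ∃ s : ℝ, g w = s := ⟨_, (EReal.coe_toReal hw (hbot w)).symm⟩
  rw [hr, hs, EReal.toReal_coe, EReal.toReal_coe]
  suffices key : ∀ l ∈ Set.Ioo (0 : ℝ) 1,
      r + β * ⟪A - u, w - u⟫ - s ≤ l * (β / 2 * ‖w - u‖ ^ 2) by
    linarith [nonpos_of_forall_le_mul key]
  rintro l ⟨hl0, hl1⟩
  have hcomb : g ((1 - l) • u + l • w) ≤ (((1 - l) * r + l * s : ℝ) : EReal) := by
    have := hconv u w (1 - l) l (by linarith) hl0.le (by ring)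
    rwa [hr, hs, ← EReal.coe_mul, ← EReal.coe_mul, ← EReal.coe_add] at this
  have hmin : r + β / 2 * ‖u - A‖ ^ 2 ≤
      (1 - l) * r + l * s + β / 2 * ‖(1 - l) • u + l • w - A‖ ^ 2 := by
    have := (h _).trans (add_le_add_left hcomb _)
    rwa [hr, ← EReal.coe_add, ← EReal.coe_add, EReal.coe_le_coe_iff] at this
  have hexpand : ‖(1 - l) • u + l • w - A‖ ^ 2 =
      ‖u - A‖ ^ 2 - 2 * l * ⟪A - u, w - u⟫ + l ^ 2 * ‖w - u‖ ^ 2 := by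
    rw [show (1 - l) • u + l • w - A = (u - A) + l • (w - u) by module, norm_add_sq_real,
      inner_smul_right, norm_smul, mul_pow, Real.norm_eq_abs, sq_abs,
      ← neg_sub A u, inner_neg_left]
    ring
  rw [hexpand] at hmin
  refine le_of_mul_le_mul_left ?_ hl0
  linarith

lemma proxGradInequality_of_isProx [CompleteSpace X] {β : ℝ} (hβ : 0 < β) {f : X → ℝ}
    {f' : X → X} {g : X → EReal} {T : X → X} (hfconv : ConvexOn ℝ Set.univ f)
    (hf : ∀ x, HasGradientAt f (f' x) x) (hlip : LipschitzWith β.toNNReal f')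
    (hgbot : ∀ x, g x ≠ ⊥) (hgtop : ∃ x, g x ≠ ⊤)
    (hgconv : ∀ x y : X, ∀ a b : ℝ, 0 ≤ a → 0 ≤ b → a + b = 1 →
      g (a • x + b • y) ≤ (a : EReal) * g x + (b : EReal) * g y)
    (hT : ∀ x, IsProx β g (x - (1 / β) • f' x) (T x)) :
    ProxGradInequality (fun x => f x + (g x).toReal) β T := by
  intro x w'
  have hprox := (hT x).inner_le hgconv hgbot ((hT x).ne_top hgtop) ((hT w').ne_top hgtop)
  set u := T x
  set w := T w'
  have hdesc := descent_lemma hβ.le hf hlip x u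
  have hcvx := hfconv.add_inner_le_of_hasGradientAt hf x w
  have hpolar : ‖x - w‖ ^ 2 = ‖x - u‖ ^ 2 - 2 * ⟪x - u, w - u⟫ + ‖u - w‖ ^ 2 := by
    rw [← sub_add_sub_cancel x u w, norm_add_sq_real, ← neg_sub w u, inner_neg_right]
    ring
  rw [show x - (1 / β) • f' x - u = (x - u) - (1 / β) • f' x by abel, inner_sub_left,
    inner_smul_left, mul_sub, ← mul_assoc, RCLike.conj_to_real, mul_one_div_cancel hβ.ne',
    one_mul] at hprox
  rw [norm_sub_rev u x] at hdesc
  have hlin : ⟪f' x, u - x⟫ - ⟪f' x, w - x⟫ + ⟪f' x, w - u⟫ = 0 := by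
    simp only [inner_sub_right]; ring
  dsimp only
  rw [hpolar]
  linarith

lemma norm_sq_smul_sub_smul_sub (τ : ℝ) (u b c : X) :
    τ * (τ - 1) * ‖u - b‖ ^ 2 + τ * ‖u - c‖ ^ 2 =
      ‖τ • u - (τ - 1) • b - c‖ ^ 2 + (τ - 1) * ‖b - c‖ ^ 2 := by
  simp only [← real_inner_self_eq_norm_sq, inner_sub_left, inner_sub_right, inner_smul_left,
    inner_smul_right, real_inner_comm, RCLike.conj_to_real]
  ring

structure IsFistaSeq (T : X → X) (t : ℕ → ℝ) (x y : ℕ → X) : Prop where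
  y_zero : y 0 = x 0
  x_succ : ∀ n, x (n + 1) = T (y n)
  y_succ : ∀ n, y (n + 1) = x (n + 1) + ((t n - 1) / t (n + 1)) • (x (n + 1) - x n)

structure IsFistaStepSize (t : ℕ → ℝ) : Prop where
  zero : t 0 = 1
  one_le : ∀ n, 1 ≤ t n
  sq_sub_le : ∀ n, t (n + 1) ^ 2 - t (n + 1) ≤ t n ^ 2

def fistaEnergy (F : X → ℝ) (β : ℝ) (t : ℕ → ℝ) (x : ℕ → X) (p : X) (n : ℕ) : ℝ :=
  2 * t n ^ 2 * (F (x (n + 1)) - F p) + β * ‖t n • x (n + 1) - (t n - 1) • x n - p‖ ^ 2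

namespace IsFistaSeq

variable {F : X → ℝ} {β : ℝ} {T : X → X} {t : ℕ → ℝ} {x y : ℕ → X} {p : X}

lemma gap_nonneg (hseq : IsFistaSeq T t x y) (hT : ProxGradInequality F β T)
    (hp : T p = p) (n : ℕ) : 0 ≤ F (x (n + 1)) - F p :=
  sub_nonneg.2 (hseq.x_succ n ▸ hT.le_of_isFixedPt hp (y n))

lemma fistaEnergy_succ_le (hseq : IsFistaSeq T t x y) (hT : ProxGradInequality F β T)
    (hp : T p = p) (ht : IsFistaStepSize t) (n : ℕ) :
    fistaEnergy F β t x p (n + 1) ≤ fistaEnergy F β t x p n := by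
  unfold fistaEnergy
  set τ := t (n + 1)
  have hτ : 1 ≤ τ := ht.one_le (n + 1)
  have hb := hT (y (n + 1)) (y n)
  have hc := hT (y (n + 1)) p
  rw [← hseq.x_succ, ← hseq.x_succ] at hb
  rw [← hseq.x_succ, hp] at hc
  have hmom :
      τ • y (n + 1) - (τ - 1) • x (n + 1) - p = t n • x (n + 1) - (t n - 1) • x n - p := by
    rw [hseq.y_succ, smul_add, smul_smul, mul_div_cancel₀ _ (by positivity : τ ≠ 0)]
    module
  have hgap := hseq.gap_nonneg hT hp n
  have hu := congrArg (β * ·) (norm_sq_smul_sub_smul_sub τ (x (n + 1 + 1)) (x (n + 1)) p)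
  have hy := congrArg (β * ·) (norm_sq_smul_sub_smul_sub τ (y (n + 1)) (x (n + 1)) p)
  rw [hmom] at hy
  have hsq : τ * (τ - 1) ≤ t n ^ 2 := by linarith [ht.sq_sub_le n]
  linarith [mul_le_mul_of_nonneg_left hb (by positivity : 0 ≤ 2 * τ * (τ - 1)),
    mul_le_mul_of_nonneg_left hc (by positivity : 0 ≤ 2 * τ),
    mul_le_mul_of_nonneg_right hsq hgap]

lemma fistaEnergy_zero_le (hseq : IsFistaSeq T t x y) (hT : ProxGradInequality F β T)
    (hp : T p = p) (ht : IsFistaStepSize t) :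
    fistaEnergy F β t x p 0 ≤ β * ‖x 0 - p‖ ^ 2 := by
  have h := hT (y 0) p
  rw [hp, ← hseq.x_succ, hseq.y_zero] at h
  simp only [fistaEnergy, ht.zero, one_smul, sub_self, zero_smul, sub_zero]
  linarith

lemma fistaEnergy_le (hseq : IsFistaSeq T t x y) (hT : ProxGradInequality F β T)
    (hp : T p = p) (ht : IsFistaStepSize t) (n : ℕ) :
    fistaEnergy F β t x p n ≤ β * ‖x 0 - p‖ ^ 2 :=
  (antitone_nat_of_succ_le (hseq.fistaEnergy_succ_le hT hp ht) (Nat.zero_le n)).trans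
    (hseq.fistaEnergy_zero_le hT hp ht)

lemma norm_momentum_le (hseq : IsFistaSeq T t x y) (hβ : 0 < β)
    (hT : ProxGradInequality F β T) (hp : T p = p) (ht : IsFistaStepSize t) (n : ℕ) :
    ‖t n • x (n + 1) - (t n - 1) • x n - p‖ ≤ ‖x 0 - p‖ := by
  have h := hseq.fistaEnergy_le hT hp ht n
  have hgap := hseq.gap_nonneg hT hp n
  unfold fistaEnergy at h
  refine (pow_le_pow_iff_left₀ (norm_nonneg _) (norm_nonneg _) two_ne_zero).1
    (le_of_mul_le_mul_left ?_ hβ)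
  linarith [mul_nonneg (sq_nonneg (t n)) hgap]

lemma sq_mul_gap_le (hseq : IsFistaSeq T t x y) (hβ : 0 ≤ β)
    (hT : ProxGradInequality F β T) (hp : T p = p) (ht : IsFistaStepSize t) (n : ℕ) :
    2 * t n ^ 2 * (F (x (n + 1)) - F p) ≤ β * ‖x 0 - p‖ ^ 2 := by
  have h := hseq.fistaEnergy_le hT hp ht n
  unfold fistaEnergy at h
  linarith [mul_nonneg hβ (sq_nonneg ‖t n • x (n + 1) - (t n - 1) • x n - p‖)]

lemma norm_sub_le_initial (hseq : IsFistaSeq T t x y) (hβ : 0 < β)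
    (hT : ProxGradInequality F β T) (hp : T p = p) (ht : IsFistaStepSize t) (n : ℕ) :
    ‖x n - p‖ ≤ ‖x 0 - p‖ := by
  induction n with
  | zero => rfl
  | succ n ih =>
    have htn : 0 < t n := zero_lt_one.trans_le (ht.one_le n)
    have htn' : 0 ≤ t n - 1 := sub_nonneg.2 (ht.one_le n)
    refine le_of_mul_le_mul_left ?_ htn
    calc t n * ‖x (n + 1) - p‖ = ‖t n • (x (n + 1) - p)‖ := by
          rw [norm_smul, Real.norm_of_nonneg htn.le]
      _ = ‖(t n • x (n + 1) - (t n - 1) • x n - p) + (t n - 1) • (x n - p)‖ := by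
          congr 1; module
      _ ≤ ‖t n • x (n + 1) - (t n - 1) • x n - p‖ + (t n - 1) * ‖x n - p‖ := by
          refine (norm_add_le _ _).trans_eq ?_
          rw [norm_smul, Real.norm_of_nonneg htn']
      _ ≤ ‖x 0 - p‖ + (t n - 1) * ‖x 0 - p‖ := by
          gcongr; exact hseq.norm_momentum_le hβ hT hp ht n
      _ = t n * ‖x 0 - p‖ := by ring

lemma mul_norm_sub_apply_le (hseq : IsFistaSeq T t x y) (hβ : 0 < β)
    (hT : ProxGradInequality F β T) (hp : T p = p) (ht : IsFistaStepSize t) (n : ℕ) :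
    t n * ‖x (n + 1) - T (x (n + 1))‖ ≤ ‖x 0 - p‖ := by
  have hdecr := hT (x (n + 1)) (y n)
  rw [← hseq.x_succ, sub_self, norm_zero, norm_sub_rev] at hdecr
  have hres : β / 2 * ‖x (n + 1) - T (x (n + 1))‖ ^ 2 ≤ F (x (n + 1)) - F p := by
    linarith [hT.le_of_isFixedPt hp (x (n + 1))]
  have htn : 0 ≤ t n := zero_le_one.trans (ht.one_le n)
  refine (pow_le_pow_iff_left₀ (by positivity) (norm_nonneg _) two_ne_zero).1
    (le_of_mul_le_mul_left ?_ hβ)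
  linarith [hseq.sq_mul_gap_le hβ.le hT hp ht n, mul_le_mul_of_nonneg_left hres (sq_nonneg (t n))]

lemma mul_norm_sub_succ_le (hseq : IsFistaSeq T t x y) (hβ : 0 < β)
    (hT : ProxGradInequality F β T) (hp : T p = p) (ht : IsFistaStepSize t) (n : ℕ) :
    t n * ‖x (n + 1) - x n‖ ≤ 2 * ‖x 0 - p‖ := by
  have htn : 0 ≤ t n := zero_le_one.trans (ht.one_le n)
  rw [← Real.norm_of_nonneg htn, ← norm_smul,
    show t n • (x (n + 1) - x n) = (t n • x (n + 1) - (t n - 1) • x n - p) - (x n - p) by module]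
  linarith [_root_.norm_sub_le _ _ |>.trans (add_le_add (hseq.norm_momentum_le hβ hT hp ht n)
    (hseq.norm_sub_le_initial hβ hT hp ht n))]

lemma tendsto_snd (hseq : IsFistaSeq T t x y) (ht : IsFistaStepSize t)
    (htop : Tendsto t atTop atTop) (hx : Tendsto x atTop (𝓝 p)) {C : ℝ}
    (hstep : ∀ n, t n * ‖x (n + 1) - x n‖ ≤ C) : Tendsto y atTop (𝓝 p) := by
  have htpos : ∀ n, 0 < t n := fun n => zero_lt_one.trans_le (ht.one_le n)
  have hclose : ∀ n, ‖y (n + 1) - x (n + 1)‖ ≤ C / t (n + 1) := fun n => by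
    rw [hseq.y_succ, add_sub_cancel_left, norm_smul, Real.norm_of_nonneg
      (div_nonneg (sub_nonneg.2 (ht.one_le n)) (htpos _).le), div_mul_eq_mul_div]
    refine div_le_div_of_nonneg_right ?_ (htpos _).le
    linarith [hstep n, norm_nonneg (x (n + 1) - x n)]
  have hlim : Tendsto (fun n => y (n + 1) - x (n + 1)) atTop (𝓝 0) :=
    squeeze_zero_norm hclose ((tendsto_const_nhds.div_atTop htop).comp (tendsto_add_atTop_nat 1))
  rw [← tendsto_add_atTop_iff_nat 1]
  simpa using ((tendsto_add_atTop_iff_nat 1).2 hx).add hlim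

end IsFistaSeq

lemma ProxGradInequality.norm_apply_le {F : X → ℝ} {β : ℝ} (hβ : 0 < β) {T : X →L[ℝ] X}
    (hT : ProxGradInequality F β T) (v : X) : ‖T v‖ ≤ ‖v‖ := by
  have hdecr := hT v 0
  have hmin := hT.le_of_isFixedPt (map_zero T) v
  rw [map_zero, sub_zero, sub_zero] at hdecr
  refine (pow_le_pow_iff_left₀ (norm_nonneg _) (norm_nonneg _) two_ne_zero).1
    (le_of_mul_le_mul_left ?_ (half_pos hβ))
  linarith

lemma orthogonal_ker_one_sub_le [CompleteSpace X] (T : X →L[ℝ] X) (hT : ∀ v, ‖T v‖ ≤ ‖v‖) :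
    (LinearMap.ker ((1 - T : X →L[ℝ] X) : X →ₗ[ℝ] X))ᗮ ≤
      (LinearMap.range ((1 - T : X →L[ℝ] X) : X →ₗ[ℝ] X)).topologicalClosure := by
  rw [← Submodule.orthogonal_orthogonal_eq_closure]
  refine Submodule.orthogonal_le fun r hr => ?_
  have hTr : ∀ v, ⟪v, r⟫ = ⟪T v, r⟫ := by
    simpa [Submodule.mem_orthogonal, inner_sub_left, sub_eq_zero] using hr
  have hfix : T r = r :=
    eq_of_norm_le_re_inner_eq_norm_sq (𝕜 := ℝ) (hT r) (by simp [← hTr])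
  simp [hfix]

noncomputable def fistaOp (T : X →L[ℝ] X) (t : ℕ → ℝ) : ℕ → (X →L[ℝ] X) × (X →L[ℝ] X)
  | 0 => (1, 1)
  | n + 1 => (T * (fistaOp T t n).2,
      T * (fistaOp T t n).2 +
        ((t n - 1) / t (n + 1)) • (T * (fistaOp T t n).2 - (fistaOp T t n).1))

section Linear

variable {T : X →L[ℝ] X} {t : ℕ → ℝ}

lemma isFistaSeq_fistaOp (a : X) :
    IsFistaSeq T t (fun n => (fistaOp T t n).1 a) (fun n => (fistaOp T t n).2 a) :=
  ⟨rfl, fun _ => rfl, fun _ => rfl⟩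

lemma IsFistaSeq.eq_fistaOp {x y : ℕ → X} (hseq : IsFistaSeq T t x y) (n : ℕ) :
    x n = (fistaOp T t n).1 (x 0) ∧ y n = (fistaOp T t n).2 (x 0) := by
  induction n with
  | zero => exact ⟨rfl, hseq.y_zero⟩
  | succ n ih =>
    have hx : x (n + 1) = (fistaOp T t (n + 1)).1 (x 0) := by rw [hseq.x_succ, ih.2]; rfl
    refine ⟨hx, ?_⟩
    rw [hseq.y_succ, hx, ih.1]
    rfl

lemma commute_fistaOp (n : ℕ) : Commute T (fistaOp T t n).1 ∧ Commute T (fistaOp T t n).2 := by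
  induction n with
  | zero => exact ⟨Commute.one_right T, Commute.one_right T⟩
  | succ n ih =>
    have hx : Commute T (T * (fistaOp T t n).2) := (Commute.refl T).mul_right ih.2
    exact ⟨hx, hx.add_right ((hx.sub_right ih.1).smul_right _)⟩

lemma IsFistaSeq.tendsto_of_linear {F : X → ℝ} {β : ℝ} {x y : ℕ → X} {p : X}
    (hseq : IsFistaSeq T t x y) (hβ : 0 < β) (hT : ProxGradInequality F β T) (hp : T p = p)
    (ht : IsFistaStepSize t) (htop : Tendsto t atTop atTop)
    (hclos : x 0 - p ∈ closure (Set.range ⇑(1 - T))) :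
    Tendsto x atTop (𝓝 p) := by
  rw [← tendsto_add_atTop_iff_nat 1, Metric.tendsto_nhds]
  intro ε hε
  obtain ⟨_, ⟨v, rfl⟩, hv⟩ := Metric.mem_closure_iff.1 hclos (ε / 2) (half_pos hε)
  set e := x 0 - p - (1 - T) v
  have he : ‖e‖ < ε / 2 := by rwa [← dist_eq_norm]
  set S : ℕ → X →L[ℝ] X := fun n => (fistaOp T t n).1
  have hdecomp : ∀ n, x n - p = (S n (p + e) - p) + (S n v - T (S n v)) := fun n => by
    have hcomm : T (S n v) = S n (T v) := congrArg (· v) (commute_fistaOp n).1.eq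
    rw [(hseq.eq_fistaOp n).1, hcomm, ← map_sub]
    change S n (x 0) - p = _
    rw [show x 0 = (p + e) + (v - T v) by simp [e]; abel, map_add]
    abel
  have hperturb : ∀ n, ‖S n (p + e) - p‖ ≤ ‖e‖ := fun n => by
    simpa [S, fistaOp] using (isFistaSeq_fistaOp (p + e)).norm_sub_le_initial hβ hT hp ht n
  have hres : ∀ n, t n * ‖S (n + 1) v - T (S (n + 1) v)‖ ≤ ‖v‖ := fun n => by
    simpa [S, fistaOp] using
      (isFistaSeq_fistaOp v).mul_norm_sub_apply_le hβ hT (map_zero T) ht n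
  have hev : ∀ᶠ n in atTop, ‖v‖ / t n < ε / 2 :=
    (tendsto_const_nhds.div_atTop htop).eventually (eventually_lt_nhds (half_pos hε))
  filter_upwards [hev] with n hn
  have htpos : 0 < t n := zero_lt_one.trans_le (ht.one_le n)
  rw [dist_eq_norm, hdecomp]
  calc ‖S (n + 1) (p + e) - p + (S (n + 1) v - T (S (n + 1) v))‖
      ≤ ‖S (n + 1) (p + e) - p‖ + ‖S (n + 1) v - T (S (n + 1) v)‖ := norm_add_le _ _
    _ < ε / 2 + ε / 2 := add_lt_add_of_le_of_lt ((hperturb _).trans he.le)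
      (((le_div_iff₀' htpos).2 (hres n)).trans_lt hn)
    _ = ε := add_halves ε

end Linear

end

theorem fista_strong_convergence_linear_general {X : Type*} [NormedAddCommGroup X]
    [InnerProductSpace ℝ X] [CompleteSpace X]
    (β : ℝ) (hβ : 0 < β)
    (f : X → ℝ) (f' : X → X)
    (hfconv : ConvexOn ℝ Set.univ f)
    (hfgrad : ∀ x, HasGradientAt f (f' x) x)
    (hflip : LipschitzWith β.toNNReal f')
    (g : X → EReal)
    (hg_nebot : ∀ x, g x ≠ ⊥) (hg_proper : ∃ x, g x ≠ ⊤)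
    (hg_conv : ∀ x y : X, ∀ a b : ℝ, 0 ≤ a → 0 ≤ b → a + b = 1 →
      g (a • x + b • y) ≤ (a : EReal) * g x + (b : EReal) * g y)
    (T : X →L[ℝ] X)
    -- T is the proximal gradient operator: T x = prox_{g/β}(x - (1/β)∇f(x))
    (hTprox : ∀ x z : X,
      g (T x) + (((β / 2) * ‖T x - (x - (1 / β) • f' x)‖ ^ 2 : ℝ) : EReal)
        ≤ g z + (((β / 2) * ‖z - (x - (1 / β) • f' x)‖ ^ 2 : ℝ) : EReal))
    (t : ℕ → ℝ) (ht0 : t 0 = 1)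
    (ht1 : ∀ n : ℕ, t n ≥ ((n : ℝ) + 2) / 2)
    (ht2 : ∀ n : ℕ, (t n) ^ 2 ≥ (t (n + 1)) ^ 2 - t (n + 1))
    (x y : ℕ → X) (hy0 : y 0 = x 0)
    (hx : ∀ n : ℕ, x (n + 1) = T (y n))
    (hy : ∀ n : ℕ, y (n + 1) = x (n + 1) + ((t n - 1) / t (n + 1)) • (x (n + 1) - x n)) :
    haveI : CompleteSpace (LinearMap.ker (((1 : X →L[ℝ] X) - T) : X →ₗ[ℝ] X)) :=
      (ContinuousLinearMap.isClosed_ker ((1 : X →L[ℝ] X) - T)).completeSpace_coe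
    Filter.Tendsto x Filter.atTop
        (nhds (Submodule.orthogonalProjectionOnto (LinearMap.ker (((1 : X →L[ℝ] X) - T) : X →ₗ[ℝ] X)) (x 0) : X))
      ∧ Filter.Tendsto y Filter.atTop
        (nhds (Submodule.orthogonalProjectionOnto (LinearMap.ker (((1 : X →L[ℝ] X) - T) : X →ₗ[ℝ] X)) (x 0) : X)) := by
  set K := LinearMap.ker (((1 : X →L[ℝ] X) - T) : X →ₗ[ℝ] X)
  have : CompleteSpace K :=
    (ContinuousLinearMap.isClosed_ker ((1 : X →L[ℝ] X) - T)).completeSpace_coe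
  set p : X := K.starProjection (x 0)
  have hT : ProxGradInequality (fun x => f x + (g x).toReal) β T :=
    proxGradInequality_of_isProx hβ hfconv hfgrad hflip hg_nebot hg_proper hg_conv hTprox
  have hp : T p = p := by
    have h : p - T p = 0 := by
      simpa using LinearMap.mem_ker.1 (K.starProjection_apply_mem (x 0))
    exact (sub_eq_zero.1 h).symm
  have ht : IsFistaStepSize t := ⟨ht0, fun n => by linarith [ht1 n, n.cast_nonneg (α := ℝ)], ht2⟩
  have htop : Tendsto t atTop atTop := tendsto_atTop_mono ht1 <|
    (tendsto_atTop_add_const_right _ 2 tendsto_natCast_atTop_atTop).atTop_div_const two_pos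
  have hseq : IsFistaSeq T t x y := ⟨hy0, hx, hy⟩
  have hclos : x 0 - p ∈ closure (Set.range ⇑(1 - T)) := by
    have := orthogonal_ker_one_sub_le T (hT.norm_apply_le hβ)
      (K.sub_starProjection_mem_orthogonal (x 0))
    rwa [← SetLike.mem_coe, Submodule.topologicalClosure_coe, LinearMap.coe_range] at this
  have hxlim := hseq.tendsto_of_linear hβ hT hp ht htop hclos
  exact ⟨hxlim, hseq.tendsto_snd ht htop hxlim (hseq.mul_norm_sub_succ_le hβ hT hp ht)⟩

theorem fista_strong_convergence_linear {X : Type*} [NormedAddCommGroup X]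
    [InnerProductSpace ℝ X] [CompleteSpace X]
    (β : ℝ) (hβ : 0 < β)
    (f : X → ℝ) (f' : X → X)
    (hfconv : ConvexOn ℝ Set.univ f)
    (hfgrad : ∀ x, HasGradientAt f (f' x) x)
    (hflip : LipschitzWith β.toNNReal f')
    (g : X → EReal)
    (hg_nebot : ∀ x, g x ≠ ⊥) (hg_proper : ∃ x, g x ≠ ⊤)
    (hg_lsc : LowerSemicontinuous g)
    (hg_conv : ∀ x y : X, ∀ a b : ℝ, 0 ≤ a → 0 ≤ b → a + b = 1 →
      g (a • x + b • y) ≤ (a : EReal) * g x + (b : EReal) * g y)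
    (T : X →L[ℝ] X) (hTne : ‖T‖ ≤ 1)
    -- T is the proximal gradient operator: T x = prox_{g/β}(x - (1/β)∇f(x))
    (hTprox : ∀ x z : X,
      g (T x) + (((β / 2) * ‖T x - (x - (1 / β) • f' x)‖ ^ 2 : ℝ) : EReal)
        ≤ g z + (((β / 2) * ‖z - (x - (1 / β) • f' x)‖ ^ 2 : ℝ) : EReal))
    (hTprox_unique : ∀ x z : X,
      (∀ w : X, g z + (((β / 2) * ‖z - (x - (1 / β) • f' x)‖ ^ 2 : ℝ) : EReal)
          ≤ g w + (((β / 2) * ‖w - (x - (1 / β) • f' x)‖ ^ 2 : ℝ) : EReal)) → z = T x)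
    -- Argmin(f+g) is nonempty
    (hS : ∃ s : X, ∀ z : X, (f s : EReal) + g s ≤ (f z : EReal) + g z)
    (t : ℕ → ℝ) (ht0 : t 0 = 1)
    (ht1 : ∀ n : ℕ, t n ≥ ((n : ℝ) + 2) / 2)
    (ht2 : ∀ n : ℕ, (t n) ^ 2 ≥ (t (n + 1)) ^ 2 - t (n + 1))
    (x y : ℕ → X) (hy0 : y 0 = x 0)
    (hx : ∀ n : ℕ, x (n + 1) = T (y n))
    (hy : ∀ n : ℕ, y (n + 1) = x (n + 1) + ((t n - 1) / t (n + 1)) • (x (n + 1) - x n)) :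
    haveI : CompleteSpace (LinearMap.ker (((1 : X →L[ℝ] X) - T) : X →ₗ[ℝ] X)) :=
      (ContinuousLinearMap.isClosed_ker ((1 : X →L[ℝ] X) - T)).completeSpace_coe
    Filter.Tendsto x Filter.atTop
        (nhds (Submodule.orthogonalProjectionOnto (LinearMap.ker (((1 : X →L[ℝ] X) - T) : X →ₗ[ℝ] X)) (x 0) : X))
      ∧ Filter.Tendsto y Filter.atTop
        (nhds (Submodule.orthogonalProjectionOnto (LinearMap.ker (((1 : X →L[ℝ] X) - T) : X →ₗ[ℝ] X)) (x 0) : X)) :=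
  fista_strong_convergence_linear_general β hβ f f' hfconv hfgrad hflip g hg_nebot hg_proper hg_conv
    T hTprox t ht0 ht1 ht2 x y hy0 hx hy
end

section
/- Let U, V be closed subspaces of a real Hilbert space X such that U + V is closed. Then there exists c < 1 with ‖P_U P_V x‖ ≤ c‖x‖ for all x ∈ (U ∩ V)^⊥, and consequently the range of Id − P_U P_V is closed. -/
/-!
Write `W = U ⊓ V`. By the open mapping theorem for `(u, v) ↦ u + v` from `U × V` onto the closed
(hence complete) space `U ⊔ V`, there is `K` with `‖u‖ ≤ K ‖u + v‖` whenever `u ∈ U ∩ Wᗮ`,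
`v ∈ V`: a bounded preimage `(u₀, v₀)` of `u + v` has `u₀ - u ∈ W`, and `u` is the shortest vector
of `u + W`. For `x ∈ Wᗮ`, both `y = P_V x` and `z = P_U y` stay in `Wᗮ`; applying the bound to
`z` and `-y` and using `‖y‖² = ‖z‖² + ‖y - z‖²` gives `‖z‖ ≤ K / √(1 + K²) ‖y‖`.
So `P_U P_V` is a strict contraction of `Wᗮ`, `1 - P_U P_V` is invertible there by the Neumann
series, and the range of `1 - P_U P_V` is exactly the closed subspace `Wᗮ`.
-/

open Submodule
open scoped InnerProductSpace

theorem le_div_sqrt_one_add_sq_mul {a b d K : ℝ} (ha : 0 ≤ a) (hb : 0 ≤ b) (hK : 0 ≤ K)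
    (had : a ≤ K * d) (hb_sq : b ^ 2 = a ^ 2 + d ^ 2) : a ≤ K / √(1 + K ^ 2) * b := by
  rw [div_mul_eq_mul_div, le_div_iff₀ (by positivity)]
  have hsq : a * a ≤ (K * d) * (K * d) := mul_self_le_mul_self ha had
  refine (pow_le_pow_iff_left₀ (by positivity) (by positivity) two_ne_zero).1 ?_
  rw [mul_pow, mul_pow, Real.sq_sqrt (by positivity), hb_sq]
  nlinarith

theorem div_sqrt_one_add_sq_lt_one {K : ℝ} (hK : 0 ≤ K) : K / √(1 + K ^ 2) < 1 := by
  rw [div_lt_one (by positivity), Real.lt_sqrt hK]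
  linarith

namespace Submodule

variable {X : Type*} [NormedAddCommGroup X] [InnerProductSpace ℝ X]

theorem completeSpace_of_hasOrthogonalProjection [CompleteSpace X] (U : Submodule ℝ X)
    [U.HasOrthogonalProjection] : CompleteSpace U :=
  have : IsClosed (U : Set X) := U.orthogonal_orthogonal ▸ Uᗮ.isClosed_orthogonal
  this.completeSpace_coe

theorem norm_le_of_mem_orthogonal_of_sub_mem {K : Submodule ℝ X} {u w : X} (hu : u ∈ Kᗮ)
    (hw : w - u ∈ K) : ‖u‖ ≤ ‖w‖ := by
  have hpyth := norm_add_sq_eq_norm_sq_add_norm_sq_real ((K.mem_orthogonal' u).1 hu _ hw)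
  rw [add_sub_cancel] at hpyth
  exact (mul_self_le_mul_self_iff (norm_nonneg _) (norm_nonneg _)).2
    (by nlinarith [mul_self_nonneg ‖w - u‖])

theorem starProjection_mem_orthogonal_of_le {V W : Submodule ℝ X} [V.HasOrthogonalProjection]
    (hWV : W ≤ V) {x : X} (hx : x ∈ Wᗮ) : V.starProjection x ∈ Wᗮ := by
  simpa using sub_mem hx (orthogonal_le hWV (V.sub_starProjection_mem_orthogonal x))

theorem sub_starProjection_starProjection_mem_orthogonal_inf (U V : Submodule ℝ X)
    [U.HasOrthogonalProjection] [V.HasOrthogonalProjection] (x : X) :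
    x - U.starProjection (V.starProjection x) ∈ (U ⊓ V)ᗮ := by
  rw [← sub_add_sub_cancel x (V.starProjection x)]
  exact add_mem (orthogonal_le inf_le_right (V.sub_starProjection_mem_orthogonal x))
    (orthogonal_le inf_le_left (U.sub_starProjection_mem_orthogonal _))

/-- The quantitative form of the closedness of `U ⊔ V` (a positive Friedrichs angle). -/
theorem exists_norm_le_mul_norm_add_of_mem_orthogonal_inf (U V : Submodule ℝ X)
    [CompleteSpace U] [CompleteSpace V] [CompleteSpace ↥(U ⊔ V)] :
    ∃ K, 0 ≤ K ∧ ∀ u ∈ U, ∀ v ∈ V, u ∈ (U ⊓ V)ᗮ → ‖u‖ ≤ K * ‖u + v‖ := by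
  let sum : (U × V) →L[ℝ] ↥(U ⊔ V) := (U.subtypeL.coprod V.subtypeL).codRestrict (U ⊔ V)
    fun p => add_mem_sup p.1.2 p.2.2
  have hsum : Function.Surjective sum := by
    rintro ⟨y, hy⟩
    obtain ⟨a, ha, b, hb, rfl⟩ := mem_sup.1 hy
    exact ⟨(⟨a, ha⟩, ⟨b, hb⟩), rfl⟩
  obtain ⟨K, hK, hpre⟩ := sum.exists_preimage_norm_le hsum
  refine ⟨K, hK.le, fun u hu v hv huW => ?_⟩
  obtain ⟨⟨u₀, v₀⟩, hpre_eq, hnorm⟩ := hpre ⟨u + v, add_mem_sup hu hv⟩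
  have hsum_eq : (u₀ : X) + v₀ = u + v := congrArg Subtype.val hpre_eq
  have hdiff : (u₀ : X) - u ∈ U ⊓ V :=
    ⟨sub_mem u₀.2 hu, sub_eq_sub_iff_add_eq_add.2 (hsum_eq.trans (add_comm u v)) ▸ sub_mem hv v₀.2⟩
  calc ‖u‖ ≤ ‖(u₀ : X)‖ := norm_le_of_mem_orthogonal_of_sub_mem huW hdiff
    _ ≤ ‖(u₀, v₀)‖ := norm_fst_le (u₀, v₀)
    _ ≤ K * ‖u + v‖ := hnorm

theorem exists_norm_starProjection_starProjection_le (U V : Submodule ℝ X)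
    [CompleteSpace U] [CompleteSpace V] [CompleteSpace ↥(U ⊔ V)] :
    ∃ c, 0 ≤ c ∧ c < 1 ∧
      ∀ x ∈ (U ⊓ V)ᗮ, ‖U.starProjection (V.starProjection x)‖ ≤ c * ‖x‖ := by
  obtain ⟨K, hK, hbound⟩ := exists_norm_le_mul_norm_add_of_mem_orthogonal_inf U V
  refine ⟨K / √(1 + K ^ 2), by positivity, div_sqrt_one_add_sq_lt_one hK, fun x hx => ?_⟩
  set y := V.starProjection x
  set z := U.starProjection y
  have hy : y ∈ (U ⊓ V)ᗮ := starProjection_mem_orthogonal_of_le inf_le_right hx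
  have hz : z ∈ (U ⊓ V)ᗮ := starProjection_mem_orthogonal_of_le inf_le_left hy
  have hzy : ‖z‖ ≤ K * ‖y - z‖ := by
    simpa [← sub_eq_add_neg, norm_sub_rev] using
      hbound z (U.starProjection_apply_mem y) (-y) (V.neg_mem (V.starProjection_apply_mem x)) hz
  have hpyth : ‖y‖ ^ 2 = ‖z‖ ^ 2 + ‖y - z‖ ^ 2 := by
    simpa using norm_sq_eq_add_norm_sq_starProjection y U
  calc ‖z‖ ≤ K / √(1 + K ^ 2) * ‖y‖ :=
        le_div_sqrt_one_add_sq_mul (norm_nonneg _) (norm_nonneg _) hK hzy hpyth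
    _ ≤ K / √(1 + K ^ 2) * ‖x‖ :=
        mul_le_mul_of_nonneg_left (V.norm_starProjection_apply_le x) (by positivity)

end Submodule

theorem ContinuousLinearMap.exists_sub_apply_eq_of_norm_le_mul {𝕜 E : Type*}
    [NontriviallyNormedField 𝕜] [NormedAddCommGroup E] [NormedSpace 𝕜 E]
    {T : E →L[𝕜] E} {M : Submodule 𝕜 E} [CompleteSpace M] (hTM : ∀ x ∈ M, T x ∈ M) {c : ℝ}
    (hc : c < 1) (hT : ∀ x ∈ M, ‖T x‖ ≤ c * ‖x‖) {y : E} (hy : y ∈ M) : ∃ x, x - T x = y := by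
  let S : M →L[𝕜] M := T.restrict hTM
  have hS : ‖S‖ < 1 := by
    refine (S.opNorm_le_bound (le_max_right c 0) fun x => ?_).trans_lt (max_lt hc one_pos)
    exact (hT x x.2).trans (mul_le_mul_of_nonneg_right (le_max_left c 0) (norm_nonneg _))
  obtain ⟨R, hR⟩ := (isUnit_one_sub_of_norm_lt_one hS).exists_right_inv
  exact ⟨R ⟨y, hy⟩, congrArg Subtype.val (congrArg (· ⟨y, hy⟩) hR)⟩

theorem alternating_projections_contraction_and_closed_range {X : Type*}
    [NormedAddCommGroup X] [InnerProductSpace ℝ X] [CompleteSpace X]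
    (U V : Submodule ℝ X) [U.HasOrthogonalProjection] [V.HasOrthogonalProjection]
    (hUV : IsClosed ((U ⊔ V : Submodule ℝ X) : Set X)) :
    (∃ c : ℝ, c < 1 ∧ ∀ x ∈ (U ⊓ V)ᗮ,
        ‖(U.orthogonalProjectionOnto ((V.orthogonalProjectionOnto x : X)) : X)‖ ≤ c * ‖x‖)
      ∧ IsClosed (Set.range (fun x : X =>
          x - (U.orthogonalProjectionOnto ((V.orthogonalProjectionOnto x : X)) : X))) := by
  have := U.completeSpace_of_hasOrthogonalProjection
  have := V.completeSpace_of_hasOrthogonalProjection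
  have : CompleteSpace ↥(U ⊔ V) := hUV.completeSpace_coe
  obtain ⟨c, -, hc1, hc⟩ := exists_norm_starProjection_starProjection_le U V
  have hmaps : ∀ x ∈ (U ⊓ V)ᗮ, (U.starProjection ∘L V.starProjection) x ∈ (U ⊓ V)ᗮ :=
    fun x hx => starProjection_mem_orthogonal_of_le inf_le_left
      (starProjection_mem_orthogonal_of_le inf_le_right hx)
  have hrange : Set.range (fun x => x - U.starProjection (V.starProjection x)) = (U ⊓ V)ᗮ :=
    subset_antisymm
      (Set.range_subset_iff.2 (sub_starProjection_starProjection_mem_orthogonal_inf U V))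
      fun y hy => ContinuousLinearMap.exists_sub_apply_eq_of_norm_le_mul hmaps hc1 hc hy
  simp only [coe_orthogonalProjectionOnto_apply]
  exact ⟨⟨c, hc1, hc⟩, hrange ▸ (U ⊓ V).isClosed_orthogonal⟩
end
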